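/- arXiv:2510.22985 — 3 statements merged into one kernel-verified Lean document; each statement's English description precedes it below -/
import Mathlib

section
/- Counterexample to Quigley's Lemma 5.11 for k = 4: with distinct variables a₁,…,a₅, let A = (a₁ ∨ a₂ ∨ a₃), B = (¬a₁ ∨ a₄ ∨ a₅), C = (¬a₁ ∨ ¬a₂ ∨ a₄), D = (¬a₁ ∨ a₃ ∨ a₄ ∨ a₅), E = (a₂ ∨ a₃ ∨ a₄ ∨ a₅). Then A and B resolve on a₁ to yield E, and C and E resolve on a₂ to yield D, but no clause of length less than 4 (other than A, B, C themselves) is obtainable by resolution from {A, B, C}: every resolvent of any two clauses in {A, B, C} has at least 4 literals, and no single resolution step among A, B, C produces D. -/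
/-- The resolventClause of clauses `C` and `D` on variable `t`, where `t` occurs positively
in `C` and negatively in `D`. -/
def resolventClause {V : Type*} [DecidableEq V] (C D : Finset (V × Bool)) (t : V) :
    Finset (V × Bool) :=
  C.erase (t, true) ∪ D.erase (t, false)

set_option maxRecDepth 10000 in
/-- Counterexample to Quigley's Lemma 5.11 for `k = 4`, over the five distinct
variables `0,…,4` of `Fin 5` (playing the roles of `a₁,…,a₅`):
`A` and `B` resolve on `a₁` to `E`, `C` and `E` resolve on `a₂` to `D`, but every
resolventClause of two clauses from `{A, B, C}` has at least `4` literals and no single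
resolution step among `A`, `B`, `C` produces `D`. -/
theorem counterexample_lemma_5_11 :
    let A : Finset (Fin 5 × Bool) := {(0, true), (1, true), (2, true)}
    let B : Finset (Fin 5 × Bool) := {(0, false), (3, true), (4, true)}
    let C : Finset (Fin 5 × Bool) := {(0, false), (1, false), (3, true)}
    let D : Finset (Fin 5 × Bool) := {(0, false), (2, true), (3, true), (4, true)}
    let E : Finset (Fin 5 × Bool) := {(1, true), (2, true), (3, true), (4, true)}
    resolventClause A B 0 = E ∧
    resolventClause E C 1 = D ∧
    (∀ C₁ ∈ ({A, B, C} : Finset (Finset (Fin 5 × Bool))),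
      ∀ C₂ ∈ ({A, B, C} : Finset (Finset (Fin 5 × Bool))),
        ∀ t : Fin 5, (t, true) ∈ C₁ → (t, false) ∈ C₂ →
          4 ≤ (resolventClause C₁ C₂ t).card ∧ resolventClause C₁ C₂ t ≠ D) := by
  intro A B C D E
  refine ⟨by decide, by decide, ?_⟩
  intro C₁ h₁ C₂ h₂ t ht hf
  simp only [Finset.mem_insert, Finset.mem_singleton] at h₁ h₂
  rcases h₁ with rfl|rfl|rfl <;> rcases h₂ with rfl|rfl|rfl <;>
    revert ht hf <;> revert t <;> decide
end

section
/- Generalized counterexample to Quigley's Lemma 5.11: for every k ≥ 4 and distinct variables a₁,…,a_{k+1}, let A = (a₁ ∨ a₂ ∨ ⋯ ∨ a_{k−1}), B = (¬a₁ ∨ a₄ ∨ a₅ ∨ ⋯ ∨ a_{k+1}), C = (¬a₁ ∨ ¬a₂ ∨ a₄ ∨ a₅ ∨ ⋯ ∨ a_k), E = (a₂ ∨ a₃ ∨ ⋯ ∨ a_{k+1}), D = (¬a₁ ∨ a₃ ∨ a₄ ∨ ⋯ ∨ a_{k+1}). Then |A| = |B| = |C| = k−1, |D| = |E| = k, A and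 B resolve on a₁ to E, C and E resolve on a₂ to D, but every resolvent of two clauses from {A, B, C} has length at least k. -/
/-- Generalized counterexample to Quigley's Lemma 5.11: for every `k ≥ 4` and
distinct variables `a 1, …, a (k+1)`, the clauses
`A = a₁ ∨ ⋯ ∨ a_{k-1}`, `B = ¬a₁ ∨ a₄ ∨ ⋯ ∨ a_{k+1}`, `C = ¬a₁ ∨ ¬a₂ ∨ a₄ ∨ ⋯ ∨ a_k`,
`E = a₂ ∨ ⋯ ∨ a_{k+1}`, `D = ¬a₁ ∨ a₃ ∨ ⋯ ∨ a_{k+1}` satisfy: `A`,`B`,`C` have length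
`k-1`, `D`,`E` have length `k`, `A` and `B` resolve on `a₁` to `E`, `C` and `E` resolve
on `a₂` to `D`, but every resolventClause of two clauses from `{A, B, C}` has length at
least `k`. -/
theorem counterexample_lemma_5_11_general {V : Type*} [DecidableEq V] (k : ℕ)
    (hk : 4 ≤ k) (a : ℕ → V)
    (ha : ∀ i j : ℕ, i ≤ k + 1 → j ≤ k + 1 → a i = a j → i = j) :
    let A : Finset (V × Bool) := (Finset.Icc 1 (k - 1)).image (fun i => (a i, true))
    let B : Finset (V × Bool) :=
      insert (a 1, false) ((Finset.Icc 4 (k + 1)).image (fun i => (a i, true)))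
    let C : Finset (V × Bool) :=
      insert (a 1, false) (insert (a 2, false)
        ((Finset.Icc 4 k).image (fun i => (a i, true))))
    let D : Finset (V × Bool) :=
      insert (a 1, false) ((Finset.Icc 3 (k + 1)).image (fun i => (a i, true)))
    let E : Finset (V × Bool) := (Finset.Icc 2 (k + 1)).image (fun i => (a i, true))
    A.card = k - 1 ∧ B.card = k - 1 ∧ C.card = k - 1 ∧ D.card = k ∧ E.card = k ∧
    resolventClause A B (a 1) = E ∧
    resolventClause E C (a 2) = D ∧
    (∀ C₁ ∈ ({A, B, C} : Finset (Finset (V × Bool))),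
      ∀ C₂ ∈ ({A, B, C} : Finset (Finset (V × Bool))),
        ∀ t : V, (t, true) ∈ C₁ → (t, false) ∈ C₂ →
          k ≤ (resolventClause C₁ C₂ t).card) := by
  intro A B C D E
  have hA : A = (Finset.Icc 1 (k - 1)).image (fun i => (a i, true)) := rfl
  have hB : B = insert (a 1, false) ((Finset.Icc 4 (k + 1)).image (fun i => (a i, true))) := rfl
  have hC : C = insert (a 1, false) (insert (a 2, false)
      ((Finset.Icc 4 k).image (fun i => (a i, true)))) := rfl
  have hD : D = insert (a 1, false) ((Finset.Icc 3 (k + 1)).image (fun i => (a i, true))) := rfl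
  have hE : E = (Finset.Icc 2 (k + 1)).image (fun i => (a i, true)) := rfl
  -- basic tools
  have hcard : ∀ m n : ℕ, n ≤ k + 1 →
      ((Finset.Icc m n).image (fun i => (a i, true))).card = n + 1 - m := by
    intro m n hn
    rw [Finset.card_image_of_injOn, Nat.card_Icc]
    intro i hi j hj h
    simp only [Finset.coe_Icc, Set.mem_Icc] at hi hj
    simp only [Prod.mk.injEq] at h
    exact ha i j (by omega) (by omega) h.1
  have hmemim : ∀ (j m n : ℕ) (b : Bool), j ≤ k + 1 → n ≤ k + 1 →
      ((a j, b) ∈ (Finset.Icc m n).image (fun i => (a i, true)) ↔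
        m ≤ j ∧ j ≤ n ∧ b = true) := by
    intro j m n b hj hn
    simp only [Finset.mem_image, Finset.mem_Icc, Prod.mk.injEq]
    constructor
    · rintro ⟨i, ⟨h1, h2⟩, hav, hb⟩
      obtain rfl := ha i j (by omega) hj hav
      exact ⟨h1, h2, hb.symm⟩
    · rintro ⟨h1, h2, rfl⟩
      exact ⟨j, ⟨h1, h2⟩, rfl, rfl⟩
  have hfnot : ∀ (v : V) (m n : ℕ),
      (v, false) ∉ (Finset.Icc m n).image (fun i => (a i, true)) := by
    intro v m n h
    simp only [Finset.mem_image, Prod.mk.injEq] at h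
    obtain ⟨i, -, -, h⟩ := h
    exact Bool.noConfusion h
  -- interval rewritings
  have hI1 : Finset.Icc 1 (k - 1) = insert 1 (Finset.Icc 2 (k - 1)) := by
    ext x; simp only [Finset.mem_Icc, Finset.mem_insert]; omega
  have hI2 : Finset.Icc 2 (k + 1) = insert 2 (Finset.Icc 3 (k + 1)) := by
    ext x; simp only [Finset.mem_Icc, Finset.mem_insert]; omega
  have hI3 : Finset.Icc 1 (k - 1) = insert 2 (insert 1 (Finset.Icc 3 (k - 1))) := by
    ext x; simp only [Finset.mem_Icc, Finset.mem_insert]; omega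
  have hU1 : Finset.Icc 2 (k - 1) ∪ Finset.Icc 4 (k + 1) = Finset.Icc 2 (k + 1) := by
    ext x; simp only [Finset.mem_Icc, Finset.mem_union]; omega
  have hU2 : Finset.Icc 3 (k + 1) ∪ Finset.Icc 4 k = Finset.Icc 3 (k + 1) := by
    ext x; simp only [Finset.mem_Icc, Finset.mem_union]; omega
  have hU3 : Finset.Icc 2 (k - 1) ∪ Finset.Icc 4 k = Finset.Icc 2 k := by
    ext x; simp only [Finset.mem_Icc, Finset.mem_union]; omega
  have hU4 : Finset.Icc 3 (k - 1) ∪ Finset.Icc 4 k = Finset.Icc 3 k := by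
    ext x; simp only [Finset.mem_Icc, Finset.mem_union]; omega
  -- cardinalities
  have hcardA : A.card = k - 1 := by
    rw [hA, hcard 1 (k - 1) (by omega)]; omega
  have hcardB : B.card = k - 1 := by
    rw [hB, Finset.card_insert_of_notMem (hfnot _ _ _), hcard 4 (k + 1) le_rfl]; omega
  have ha12 : a 1 ≠ a 2 := fun h => by have := ha 1 2 (by omega) (by omega) h; omega
  have hnBC : ((a 1, false) : V × Bool) ∉
      insert (a 2, false) ((Finset.Icc 4 k).image (fun i => (a i, true))) := by
    intro h
    rcases Finset.mem_insert.1 h with h | h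
    · exact ha12 (congrArg Prod.fst h)
    · exact hfnot _ _ _ h
  have hcardC : C.card = k - 1 := by
    rw [hC, Finset.card_insert_of_notMem hnBC,
      Finset.card_insert_of_notMem (hfnot _ _ _), hcard 4 k (by omega)]; omega
  have hcardD : D.card = k := by
    rw [hD, Finset.card_insert_of_notMem (hfnot _ _ _), hcard 3 (k + 1) le_rfl]; omega
  have hcardE : E.card = k := by
    rw [hE, hcard 2 (k + 1) le_rfl]; omega
  -- erased clauses
  have hAe1 : A.erase (a 1, true) = (Finset.Icc 2 (k - 1)).image (fun i => (a i, true)) := by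
    rw [hA, hI1, Finset.image_insert, Finset.erase_insert]
    rw [hmemim 1 2 (k - 1) true (by omega) (by omega)]; omega
  have hAe2 : A.erase (a 2, true) =
      insert (a 1, true) ((Finset.Icc 3 (k - 1)).image (fun i => (a i, true))) := by
    rw [hA, hI3, Finset.image_insert, Finset.image_insert, Finset.erase_insert]
    intro h
    rcases Finset.mem_insert.1 h with h | h
    · exact ha12 (congrArg Prod.fst h).symm
    · rw [hmemim 2 3 (k - 1) true (by omega) (by omega)] at h; omega
  have hBe : B.erase (a 1, false) = (Finset.Icc 4 (k + 1)).image (fun i => (a i, true)) := by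
    rw [hB, Finset.erase_insert (hfnot _ _ _)]
  have hCe1 : C.erase (a 1, false) =
      insert (a 2, false) ((Finset.Icc 4 k).image (fun i => (a i, true))) := by
    rw [hC, Finset.erase_insert hnBC]
  have hCe2 : C.erase (a 2, false) =
      insert (a 1, false) ((Finset.Icc 4 k).image (fun i => (a i, true))) := by
    rw [hC, Finset.erase_insert_of_ne (fun h => ha12 (congrArg Prod.fst h)),
      Finset.erase_insert (hfnot _ _ _)]
  have hEe : E.erase (a 2, true) = (Finset.Icc 3 (k + 1)).image (fun i => (a i, true)) := by
    rw [hE, hI2, Finset.image_insert, Finset.erase_insert]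
    rw [hmemim 2 3 (k + 1) true (by omega) le_rfl]; omega
  -- resolvents
  have hAB : resolventClause A B (a 1) = E := by
    rw [resolventClause, hAe1, hBe, ← Finset.image_union, hU1, hE]
  have hEC : resolventClause E C (a 2) = D := by
    rw [resolventClause, hEe, hCe2, Finset.union_insert, ← Finset.image_union, hU2, hD]
  have hAC1 : k ≤ (resolventClause A C (a 1)).card := by
    rw [resolventClause, hAe1, hCe1, Finset.union_insert, ← Finset.image_union, hU3,
      Finset.card_insert_of_notMem (hfnot _ _ _), hcard 2 k (by omega)]
    omega
  have hAC2 : k ≤ (resolventClause A C (a 2)).card := by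
    rw [resolventClause, hAe2, hCe2, Finset.insert_union, Finset.union_insert,
      ← Finset.image_union, hU4]
    rw [Finset.card_insert_of_notMem, Finset.card_insert_of_notMem (hfnot _ _ _),
      hcard 3 k (by omega)]
    · omega
    · intro h
      rcases Finset.mem_insert.1 h with h | h
      · exact Bool.noConfusion (congrArg Prod.snd h)
      · rw [hmemim 1 3 k true (by omega) (by omega)] at h; omega
  -- membership contradictions
  have hn1B : ((a 1, true) : V × Bool) ∉ B := by
    rw [hB]; intro h
    rcases Finset.mem_insert.1 h with h | h
    · exact Bool.noConfusion (congrArg Prod.snd h)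
    · rw [hmemim 1 4 (k + 1) true (by omega) le_rfl] at h; omega
  have hn1C : ((a 1, true) : V × Bool) ∉ C := by
    rw [hC]; intro h
    rcases Finset.mem_insert.1 h with h | h
    · exact Bool.noConfusion (congrArg Prod.snd h)
    rcases Finset.mem_insert.1 h with h | h
    · exact Bool.noConfusion (congrArg Prod.snd h)
    · rw [hmemim 1 4 k true (by omega) (by omega)] at h; omega
  have hn2B : ((a 2, true) : V × Bool) ∉ B := by
    rw [hB]; intro h
    rcases Finset.mem_insert.1 h with h | h
    · exact Bool.noConfusion (congrArg Prod.snd h)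
    · rw [hmemim 2 4 (k + 1) true (by omega) le_rfl] at h; omega
  have hn2C : ((a 2, true) : V × Bool) ∉ C := by
    rw [hC]; intro h
    rcases Finset.mem_insert.1 h with h | h
    · exact Bool.noConfusion (congrArg Prod.snd h)
    rcases Finset.mem_insert.1 h with h | h
    · exact Bool.noConfusion (congrArg Prod.snd h)
    · rw [hmemim 2 4 k true (by omega) (by omega)] at h; omega
  refine ⟨hcardA, hcardB, hcardC, hcardD, hcardE, hAB, hEC, ?_⟩
  intro C₁ hC₁ C₂ hC₂ t ht1 ht2
  simp only [Finset.mem_insert, Finset.mem_singleton] at hC₁ hC₂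
  -- C₂ determines t
  rcases hC₂ with rfl | rfl | rfl
  · -- C₂ = A : no negative literal
    rw [hA] at ht2; exact absurd ht2 (hfnot _ _ _)
  · -- C₂ = B : t = a 1
    have ht : t = a 1 := by
      rw [hB] at ht2
      rcases Finset.mem_insert.1 ht2 with h | h
      · exact congrArg Prod.fst h
      · exact absurd h (hfnot _ _ _)
    subst ht
    rcases hC₁ with rfl | rfl | rfl
    · rw [hAB, hcardE]
    · exact absurd ht1 hn1B
    · exact absurd ht1 hn1C
  · -- C₂ = C : t = a 1 or t = a 2
    rw [hC] at ht2
    rcases Finset.mem_insert.1 ht2 with h | h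
    · have ht : t = a 1 := congrArg Prod.fst h
      subst ht
      rcases hC₁ with rfl | rfl | rfl
      · exact hAC1
      · exact absurd ht1 hn1B
      · exact absurd ht1 hn1C
    rcases Finset.mem_insert.1 h with h | h
    · have ht : t = a 2 := congrArg Prod.fst h
      subst ht
      rcases hC₁ with rfl | rfl | rfl
      · exact hAC2
      · exact absurd ht1 hn2B
      · exact absurd ht1 hn2C
    · exact absurd h (hfnot _ _ _)
end

section
/- Counterexample to Quigley's Lemma 5.17 for k = 4: with distinct variables a₁,…,a₆, let A = (a₁ ∨ a₂ ∨ a₅), B = (a₃ ∨ a₄ ∨ ¬a₅), C = (¬a₁ ∨ a₂ ∨ a₆), D = (a₃ ∨ a₄ ∨ ¬a₆), E = (a₁ ∨ a₂ ∨ a₃ ∨ a₄), F = (¬a₁ ∨ a₂ ∨ a₃ ∨ a₄), G = (a₂ ∨ a₃ ∨ a₄). Then A,B resolve on a₅ to E; C,D resolve on a₆ to F; E,F resolve on a₁ to G; the only tautology-free resolvent of length less than 4 among pairs from {A, B, C, D} is (a₂ ∨ a₅ ∨ a₆), and no sequence of resolutions among {A, B, C, D, (a₂ ∨ a₅ ∨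 a₆)} using only clauses of length at most 3 produces G. -/
/-- Clauses derivable from the initial set `S` by resolution steps, where every
derived (intermediate or final) clause is required to have length at most `bound`. -/
inductive Derive {V : Type*} [DecidableEq V] (S : Finset (V × Bool) → Prop) (bound : ℕ) :
    Finset (V × Bool) → Prop
  | base (C : Finset (V × Bool)) : S C → Derive S bound C
  | res (C D : Finset (V × Bool)) (t : V) :
      Derive S bound C → Derive S bound D →
      (t, true) ∈ C → (t, false) ∈ D →
      (resolventClause C D t).card ≤ bound → Derive S bound (resolventClause C D t)

def cA : Finset (Fin 6 × Bool) := {(0, true), (1, true), (4, true)}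
def cB : Finset (Fin 6 × Bool) := {(2, true), (3, true), (4, false)}
def cC : Finset (Fin 6 × Bool) := {(0, false), (1, true), (5, true)}
def cD : Finset (Fin 6 × Bool) := {(2, true), (3, true), (5, false)}
def cH : Finset (Fin 6 × Bool) := {(1, true), (4, true), (5, true)}

def closedSet : Finset (Finset (Fin 6 × Bool)) := {cA, cB, cC, cD, cH}

lemma key : ∀ C ∈ closedSet, ∀ D ∈ closedSet, ∀ t : Fin 6,
    (t, true) ∈ C → (t, false) ∈ D → (resolventClause C D t).card ≤ 3 →
    resolventClause C D t ∈ closedSet := by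
  intro C hC D hD t
  fin_cases hC <;> fin_cases hD <;> revert t <;> decide

lemma invLemma : ∀ X : Finset (Fin 6 × Bool),
    Derive (fun X => X ∈ ({cA, cB, cC, cD} : Finset (Finset (Fin 6 × Bool)))) 3 X →
    X ∈ closedSet := by
  intro X hX
  induction hX with
  | base C hC => exact Finset.mem_of_subset (by decide) hC
  | res C D t _ _ ht hf hcard ihC ihD => exact key C ihC D ihD t ht hf hcard

/-- Counterexample to Quigley's Lemma 5.17 for `k = 4`, over the six distinct
variables `0,…,5` of `Fin 6` (playing the roles of `a₁,…,a₆`):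
`A,B` resolve on `a₅` to `E`; `C,D` resolve on `a₆` to `F`; `E,F` resolve on `a₁` to
`G`; the only tautology-free resolventClause of length less than `4` among pairs from
`{A,B,C,D}` is `(a₂ ∨ a₅ ∨ a₆)`; and no sequence of resolutions starting from
`{A,B,C,D}` that uses only clauses of length at most `3` produces `G`. -/
theorem counterexample_lemma_5_17 :
    let A : Finset (Fin 6 × Bool) := {(0, true), (1, true), (4, true)}
    let B : Finset (Fin 6 × Bool) := {(2, true), (3, true), (4, false)}
    let C : Finset (Fin 6 × Bool) := {(0, false), (1, true), (5, true)}
    let D : Finset (Fin 6 × Bool) := {(2, true), (3, true), (5, false)}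
    let E : Finset (Fin 6 × Bool) := {(0, true), (1, true), (2, true), (3, true)}
    let F : Finset (Fin 6 × Bool) := {(0, false), (1, true), (2, true), (3, true)}
    let G : Finset (Fin 6 × Bool) := {(1, true), (2, true), (3, true)}
    let H : Finset (Fin 6 × Bool) := {(1, true), (4, true), (5, true)}
    resolventClause A B 4 = E ∧
    resolventClause C D 5 = F ∧
    resolventClause E F 0 = G ∧
    (∀ C₁ ∈ ({A, B, C, D} : Finset (Finset (Fin 6 × Bool))),
      ∀ C₂ ∈ ({A, B, C, D} : Finset (Finset (Fin 6 × Bool))),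
        ∀ t : Fin 6, (t, true) ∈ C₁ → (t, false) ∈ C₂ →
          ((resolventClause C₁ C₂ t).card < 4 ∧
              (∀ v : Fin 6, ¬ ((v, true) ∈ resolventClause C₁ C₂ t ∧
                (v, false) ∈ resolventClause C₁ C₂ t))) →
            resolventClause C₁ C₂ t = H) ∧
    ¬ Derive (fun X => X ∈ ({A, B, C, D} : Finset (Finset (Fin 6 × Bool)))) 3 G := by
  refine ⟨by decide, by decide, by decide, ?_, ?_⟩
  · intro C₁ hC₁ C₂ hC₂ t
    fin_cases hC₁ <;> fin_cases hC₂ <;> revert t <;> decide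
  · intro h
    have := invLemma _ h
    revert this
    decide
end
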